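/- Let (M,d) be a metric space and μ a Borel measure on M such that V(x,r) := μ(B(x,r)) is finite and strictly positive for all x ∈ M and r > 0, and suppose there exist constants C_μ > 0 and d₂ > 0 such that V(x,R)/V(x,r) ≤ C_μ (R/r)^{d₂} for all x ∈ M and 0 < r ≤ R. Let β > 1 and c > 0. Then there exists a constant C > 0 such that for all x ∈ M and all u, r > 0, ∫_{M ∖ B(x,r)} (1/V(x, u^{1/β})) · exp( - c (d(x,y)^β / u)^{1/(β-1)} ) dμ(y) ≤ C · u / r^β. -/

import Mathlib

open MeasureTheory Set Real Metric ENNReal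

/-!
Write `ρ = u^{1/β}`, so that the integrand at distance `s` is `exp(-c (s/ρ)^{β/(β-1)}) / V(x,ρ)`.
Cut `B(x,r)ᶜ` into the dyadic annuli `2^k r ≤ d(x,y) < 2^{k+1} r`. On the `k`-th annulus the
integrand is at most its value at `s = 2^k r`, and volume doubling gives
`V(x,2s) ≤ Cμ (1 + 2s/ρ)^{d₂} V(x,ρ)` for every `s`. The stretched exponential absorbs this
polynomial factor together with an extra `(s/ρ)^β`, so the `k`-th annulus contributes at most a
constant times `(ρ / 2^k r)^β = 2^{-kβ} u / r^β`, and the geometric series in `k` converges.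
-/

section DyadicAnnuli

variable {M : Type*} [PseudoMetricSpace M]

lemma compl_ball_subset_iUnion_annuli (x : M) {r : ℝ} (hr : 0 < r) :
    (ball x r)ᶜ ⊆ ⋃ k : ℕ, ball x (2 ^ (k + 1) * r) \ ball x (2 ^ k * r) := by
  intro y hy
  rw [mem_compl_iff, mem_ball, not_lt] at hy
  obtain ⟨k, hk, hk'⟩ := exists_nat_pow_near ((one_le_div hr).2 hy) one_lt_two
  refine mem_iUnion.2 ⟨k, ?_, ?_⟩
  · rwa [mem_ball, ← div_lt_iff₀ hr]
  · rwa [mem_ball, not_lt, ← le_div_iff₀ hr]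

variable [MeasurableSpace M] [OpensMeasurableSpace M]

lemma setLIntegral_compl_ball_le_tsum (μ : Measure M) (x : M) {r : ℝ} (hr : 0 < r)
    {g : ℝ → ℝ≥0∞} (hg : AntitoneOn g (Ici r)) :
    ∫⁻ y in (ball x r)ᶜ, g (dist x y) ∂μ ≤
      ∑' k : ℕ, g (2 ^ k * r) * μ (ball x (2 ^ (k + 1) * r)) := by
  calc ∫⁻ y in (ball x r)ᶜ, g (dist x y) ∂μ
      ≤ ∫⁻ y in ⋃ k : ℕ, ball x (2 ^ (k + 1) * r) \ ball x (2 ^ k * r), g (dist x y) ∂μ :=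
        lintegral_mono_set (compl_ball_subset_iUnion_annuli x hr)
    _ ≤ ∑' k : ℕ, ∫⁻ y in ball x (2 ^ (k + 1) * r) \ ball x (2 ^ k * r), g (dist x y) ∂μ :=
        lintegral_iUnion_le _ _
    _ ≤ ∑' k : ℕ, g (2 ^ k * r) * μ (ball x (2 ^ (k + 1) * r)) := by
        refine ENNReal.tsum_le_tsum fun k => ?_
        have hrk : r ≤ 2 ^ k * r := le_mul_of_one_le_left hr.le (one_le_pow₀ one_le_two)
        calc ∫⁻ y in ball x (2 ^ (k + 1) * r) \ ball x (2 ^ k * r), g (dist x y) ∂μ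
            ≤ ∫⁻ _ in ball x (2 ^ (k + 1) * r) \ ball x (2 ^ k * r), g (2 ^ k * r) ∂μ := by
              refine setLIntegral_mono' (measurableSet_ball.diff measurableSet_ball) fun y hy => ?_
              have hy : 2 ^ k * r ≤ dist x y := by simpa [dist_comm] using hy.2
              exact hg hrk (hrk.trans hy) hy
          _ ≤ g (2 ^ k * r) * μ (ball x (2 ^ (k + 1) * r)) := by
              rw [setLIntegral_const]
              gcongr
              exact sdiff_subset

end DyadicAnnuli

lemma ENNReal.tsum_ofReal_mul_geometric {A q : ℝ} (hA : 0 ≤ A) (hq₀ : 0 ≤ q) (hq₁ : q < 1) :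
    ∑' k : ℕ, ENNReal.ofReal (A * q ^ k) = ENNReal.ofReal (A / (1 - q)) := by
  rw [← ENNReal.ofReal_tsum_of_nonneg (fun k => by positivity)
    ((summable_geometric_of_lt_one hq₀ hq₁).mul_left A), tsum_mul_left,
    tsum_geometric_of_lt_one hq₀ hq₁, div_eq_mul_inv]

lemma rpow_mul_exp_neg_mul_rpow_le {a c p t : ℝ} (hc : 0 < c) (hp : 1 ≤ p) (ht : 1 ≤ t) :
    t ^ a * exp (-(c * t ^ p)) ≤ (⌈a⌉₊).factorial / c ^ ⌈a⌉₊ := by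
  set n := ⌈a⌉₊
  set s := t ^ p
  have hs : t ≤ s := by simpa using rpow_le_rpow_of_exponent_le ht hp
  have hta : t ^ a ≤ s ^ n :=
    calc t ^ a ≤ t ^ (n : ℝ) := rpow_le_rpow_of_exponent_le ht (Nat.le_ceil a)
      _ = t ^ n := rpow_natCast t n
      _ ≤ s ^ n := pow_le_pow_left₀ (by linarith) hs n
  have hexp : (c * s) ^ n / n.factorial ≤ exp (c * s) :=
    pow_div_factorial_le_exp _ (mul_nonneg hc.le (by linarith)) n
  rw [exp_neg, ← div_eq_mul_inv, div_le_div_iff₀ (exp_pos _) (pow_pos hc n)]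
  rw [div_le_iff₀ (by positivity), mul_pow] at hexp
  calc t ^ a * c ^ n ≤ s ^ n * c ^ n := by gcongr
    _ ≤ n.factorial * exp (c * s) := by linarith

lemma exists_one_add_two_mul_rpow_mul_exp_neg_le {a b c p : ℝ} (ha : 0 ≤ a) (hb : 0 ≤ b)
    (hc : 0 < c) (hp : 1 ≤ p) :
    ∃ K > 0, ∀ t > 0, (1 + 2 * t) ^ a * exp (-(c * t ^ p)) ≤ K * t ^ (-b) := by
  set L := max 1 ((⌈a + b⌉₊).factorial / c ^ ⌈a + b⌉₊)
  refine ⟨3 ^ a * L, by positivity, fun t ht => ?_⟩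
  have hexp : exp (-(c * t ^ p)) ≤ 1 := exp_le_one_iff.2 (by nlinarith [rpow_pos_of_pos ht p])
  rcases le_total t 1 with h | h
  · calc (1 + 2 * t) ^ a * exp (-(c * t ^ p)) ≤ 3 ^ a * 1 := by
          gcongr
          linarith
      _ ≤ 3 ^ a * L * t ^ (-b) := by
          rw [mul_assoc]
          gcongr
          exact one_le_mul_of_one_le_of_one_le (le_max_left _ _)
            (one_le_rpow_of_pos_of_le_one_of_nonpos ht h (by linarith))
  · calc (1 + 2 * t) ^ a * exp (-(c * t ^ p))
        ≤ (3 * t) ^ a * exp (-(c * t ^ p)) := by gcongr; linarith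
      _ = 3 ^ a * (t ^ (a + b) * exp (-(c * t ^ p))) * t ^ (-b) := by
          rw [mul_rpow (by norm_num) ht.le, rpow_add ht, rpow_neg ht.le]
          field_simp
      _ ≤ 3 ^ a * L * t ^ (-b) := by
          gcongr
          exact (rpow_mul_exp_neg_mul_rpow_le hc hp h).trans (le_max_right _ _)

lemma le_mul_one_add_div_rpow_mul {v : ℝ → ℝ} {C d ρ R : ℝ} (hv : MonotoneOn v (Ioi 0))
    (hd : 0 ≤ d) (hρ : 0 < ρ) (hR : 0 < R) (hvρ : 0 < v ρ)
    (hD : ∀ R, ρ ≤ R → v R / v ρ ≤ C * (R / ρ) ^ d) :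
    v R ≤ C * (1 + R / ρ) ^ d * v ρ := by
  have hC : 1 ≤ C := by simpa [div_self hvρ.ne', div_self hρ.ne'] using hD ρ le_rfl
  rcases le_total ρ R with h | h
  · calc v R ≤ C * (R / ρ) ^ d * v ρ := (div_le_iff₀ hvρ).1 (hD R h)
      _ ≤ C * (1 + R / ρ) ^ d * v ρ := by gcongr; linarith
  · calc v R ≤ v ρ := hv hR hρ h
      _ ≤ C * (1 + R / ρ) ^ d * v ρ :=
          le_mul_of_one_le_left hvρ.le
            (one_le_mul_of_one_le_of_one_le hC (one_le_rpow (by linarith [div_pos hR hρ]) hd))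

lemma antitoneOn_ofReal_mul_exp_neg_rpow_div {A c β γ u : ℝ} (hA : 0 ≤ A) (hc : 0 ≤ c)
    (hβ : 0 ≤ β) (hγ : 0 ≤ γ) (hu : 0 ≤ u) :
    AntitoneOn (fun s => ENNReal.ofReal (A * exp (-(c * (s ^ β / u) ^ γ)))) (Ici 0) :=
  fun s (hs : 0 ≤ s) t _ hst => by
    dsimp only
    gcongr

lemma one_div_mul_exp_neg_rpow_mul_le {v : ℝ → ℝ} {C d β c K u s : ℝ} (hβ : β ≠ 0) (hu : 0 < u)
    (hs : 0 < s) (hC : 0 ≤ C) (hd : 0 ≤ d) (hv : MonotoneOn v (Ioi 0))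
    (hvρ : 0 < v (u ^ (1 / β)))
    (hD : ∀ R, u ^ (1 / β) ≤ R → v R / v (u ^ (1 / β)) ≤ C * (R / u ^ (1 / β)) ^ d)
    (hK : ∀ t > 0, (1 + 2 * t) ^ d * exp (-(c * t ^ (β / (β - 1)))) ≤ K * t ^ (-β)) :
    1 / v (u ^ (1 / β)) * exp (-(c * (s ^ β / u) ^ (1 / (β - 1)))) * v (2 * s) ≤
      C * K * (u / s ^ β) := by
  set ρ := u ^ (1 / β) with hρ_def
  have hρ : 0 < ρ := rpow_pos_of_pos hu _
  have hρβ : ρ ^ β = u := by rw [hρ_def, one_div, rpow_inv_rpow hu.le hβ]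
  set t := s / ρ with ht_def
  have ht : 0 < t := div_pos hs hρ
  have hexponent : (s ^ β / u) ^ (1 / (β - 1)) = t ^ (β / (β - 1)) := by
    rw [← hρβ, ← div_rpow hs.le hρ.le, ← rpow_mul ht.le, mul_one_div]
  have hvolume : v (2 * s) ≤ C * (1 + 2 * t) ^ d * v ρ := by
    rw [ht_def, ← mul_div_assoc]
    exact le_mul_one_add_div_rpow_mul hv hd hρ (by positivity) hvρ hD
  have hscale : t ^ (-β) = u / s ^ β := by
    rw [rpow_neg ht.le, div_rpow hs.le hρ.le, hρβ, inv_div]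
  calc 1 / v ρ * exp (-(c * (s ^ β / u) ^ (1 / (β - 1)))) * v (2 * s)
      ≤ 1 / v ρ * exp (-(c * t ^ (β / (β - 1)))) * (C * (1 + 2 * t) ^ d * v ρ) := by
        rw [hexponent]
        gcongr
    _ = C * ((1 + 2 * t) ^ d * exp (-(c * t ^ (β / (β - 1))))) := by field_simp
    _ ≤ C * (K * t ^ (-β)) := mul_le_mul_of_nonneg_left (hK t ht) hC
    _ = C * K * (u / s ^ β) := by rw [hscale, mul_assoc]

/-- under volume doubling, the sub-Gaussian tail estimate
`∫_{B(x,r)ᶜ} (1/V(x,u^{1/β})) exp(-c (d(x,y)^β/u)^{1/(β-1)}) μ(dy) ≤ C u/r^β`. -/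
theorem stmt_19 {M : Type*} [MetricSpace M] [MeasurableSpace M] [BorelSpace M]
    (μ : Measure M) (V : M → ℝ → ℝ)
    (hV : ∀ x r, V x r = (μ (ball x r)).toReal)
    (hfin : ∀ (x : M) (r : ℝ), 0 < r → μ (ball x r) < ⊤)
    (hpos : ∀ (x : M) (r : ℝ), 0 < r → 0 < μ (ball x r))
    (Cμ d₂ : ℝ) (hCμ : 0 < Cμ) (hd₂ : 0 < d₂)
    (hVD : ∀ (x : M) (r R : ℝ), 0 < r → r ≤ R → V x R / V x r ≤ Cμ * (R / r) ^ d₂)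
    (β c : ℝ) (hβ : 1 < β) (hc : 0 < c) :
    ∃ C : ℝ, 0 < C ∧ ∀ (x : M) (u r : ℝ), 0 < u → 0 < r →
      (∫⁻ y in (ball x r)ᶜ,
        ENNReal.ofReal ((1 / V x (u ^ (1 / β))) *
          Real.exp (-(c * (dist x y ^ β / u) ^ (1 / (β - 1))))) ∂μ) ≤
      ENNReal.ofReal (C * u / r ^ β) := by
  have hβ₀ : 0 < β := by linarith
  obtain ⟨K, hK, hprofile⟩ := exists_one_add_two_mul_rpow_mul_exp_neg_le hd₂.le hβ₀.le hc
    (p := β / (β - 1)) ((one_le_div (by linarith)).2 (by linarith))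
  set q : ℝ := 2 ^ (-β)
  have hq₀ : 0 ≤ q := by positivity
  have hq₁ : q < 1 := rpow_lt_one_of_one_lt_of_neg one_lt_two (by linarith)
  refine ⟨Cμ * K / (1 - q), div_pos (by positivity) (by linarith), fun x u r hu hr => ?_⟩
  have hρ : 0 < u ^ (1 / β) := rpow_pos_of_pos hu _
  have hVρ : 0 < V x (u ^ (1 / β)) := by
    rw [hV]; exact ENNReal.toReal_pos (hpos x _ hρ).ne' (hfin x _ hρ).ne
  have hmono : MonotoneOn (V x) (Ioi 0) := fun R _ R' hR' h => by
    rw [hV, hV]; exact ENNReal.toReal_mono (hfin x R' hR').ne (measure_mono (ball_subset_ball h))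
  have hanti := antitoneOn_ofReal_mul_exp_neg_rpow_div (one_div_pos.2 hVρ).le hc.le hβ₀.le
    (one_div_pos.2 (sub_pos.2 hβ)).le hu.le
  have hterm (k : ℕ) : ENNReal.ofReal ((1 / V x (u ^ (1 / β))) *
      exp (-(c * ((2 ^ k * r) ^ β / u) ^ (1 / (β - 1))))) * μ (ball x (2 ^ (k + 1) * r)) ≤
      ENNReal.ofReal (Cμ * K * (u / r ^ β) * q ^ k) := by
    have hs : 0 < 2 ^ k * r := by positivity
    have hscale : u / (2 ^ k * r) ^ β = u / r ^ β * q ^ k := by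
      simp only [q, mul_rpow (by positivity : (0 : ℝ) ≤ 2 ^ k) hr.le, ← rpow_pow_comm zero_le_two,
        rpow_neg zero_le_two, inv_pow]
      field_simp
    rw [← ofReal_toReal (hfin x _ (by positivity)).ne, ← hV, ← ofReal_mul (by positivity),
      show 2 ^ (k + 1) * r = 2 * (2 ^ k * r) by ring]
    refine ofReal_le_ofReal ((one_div_mul_exp_neg_rpow_mul_le hβ₀.ne' hu hs hCμ.le hd₂.le hmono hVρ
      (fun R hR => hVD x _ R hρ hR) hprofile).trans_eq ?_)
    rw [hscale]; ring
  calc _ ≤ _ := setLIntegral_compl_ball_le_tsum μ x hr (hanti.mono (Ici_subset_Ici.2 hr.le))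
    _ ≤ _ := ENNReal.tsum_le_tsum hterm
    _ = _ := ENNReal.tsum_ofReal_mul_geometric (by positivity) hq₀ hq₁
    _ = _ := by congr 1; field_simp
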